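/- Let (E, M) be a factorization system on a cocomplete category C with arbitrary cointersections of E-morphisms, and suppose the factorization system is proper (E ⊆ epimorphisms, M ⊆ monomorphisms). Then for any functor F : C → D between such factegories preserving the right class M, F preserves the E-tightness of α-filtered M-sinks if and only if F is α-bounded (preserves the E-tightness of small α-filtered M-cocones). -/
import Mathlib


/-!
STATEMENT 15 (Remark `boundedvsunions`): let `(E, M)` be a proper factorization
system on a cocomplete category with arbitrary cointersections of
`E`-morphisms.  For a functor `F : C ⥤ D` between such (proper) factegories
preserving the right class `M`, `F` preserves the `E`-tightness of α-filtered
`M`-sinks iff `F` is α-bounded (preserves the `E`-tightness of small α-filtered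
`M`-cocones).
-/

open CategoryTheory CategoryTheory.Limits

universe v u

namespace Stmt15

/-- A proper orthogonal factorization system `(E, M)` on a category. -/
structure ProperFS (C : Type u) [Category.{v} C] where
  E : MorphismProperty C
  M : MorphismProperty C
  epi_of_E : ∀ {X Y : C} (f : X ⟶ Y), E f → Epi f
  mono_of_M : ∀ {X Y : C} (f : X ⟶ Y), M f → Mono f
  E_of_iso : ∀ {X Y : C} (f : X ⟶ Y), IsIso f → E f
  M_of_iso : ∀ {X Y : C} (f : X ⟶ Y), IsIso f → M f
  E_comp : ∀ {X Y Z : C} (f : X ⟶ Y) (g : Y ⟶ Z), E f → E g → E (f ≫ g)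
  M_comp : ∀ {X Y Z : C} (f : X ⟶ Y) (g : Y ⟶ Z), M f → M g → M (f ≫ g)
  fac : ∀ {X Y : C} (f : X ⟶ Y), ∃ (Z : C) (e : X ⟶ Z) (m : Z ⟶ Y), E e ∧ M m ∧ e ≫ m = f
  lift : ∀ {A B X Y : C} (e : A ⟶ B) (m : X ⟶ Y), E e → M m →
    ∀ (u : A ⟶ X) (v : B ⟶ Y), u ≫ m = e ≫ v →
      ∃! d : B ⟶ X, e ≫ d = u ∧ d ≫ m = v

variable {C : Type u} [Category.{v} C] {D : Type u} [Category.{v} D]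

section
variable [HasColimitsOfSize.{v, v} C] [HasColimitsOfSize.{v, v} D]

/-- A small sink `(m_i : Y_i ⟶ X)` is `E`-tight if the induced morphism
`∐ Y_i ⟶ X` lies in `E`. -/
def ETightSink (F : ProperFS C) {I : Type v} {X : C} {Y : I → C}
    (m : ∀ i, Y i ⟶ X) : Prop :=
  F.E (Sigma.desc m)

/-- A sink is an `M`-sink if each of its components lies in `M`. -/
def MSink (F : ProperFS C) {I : Type v} {X : C} {Y : I → C}
    (m : ∀ i, Y i ⟶ X) : Prop :=
  ∀ i, F.M (m i)

/-- A small `M`-sink is α-filtered if every subfamily of size `< α` factors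
through a single member of the sink. -/
def AlphaFilteredSink (α : Cardinal.{v}) {I : Type v} {X : C} {Y : I → C}
    (m : ∀ i, Y i ⟶ X) : Prop :=
  ∀ s : Set I, Cardinal.mk s < α →
    ∃ i : I, ∀ j ∈ s, ∃ t : Y j ⟶ Y i, t ≫ m i = m j

/-- `F` preserves the `E`-tightness of α-filtered `M`-sinks. -/
def PreservesTightSinks (FC : ProperFS C) (FD : ProperFS D) (α : Cardinal.{v})
    (F : C ⥤ D) : Prop :=
  ∀ (I : Type v) (X : C) (Y : I → C) (m : ∀ i, Y i ⟶ X),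
    MSink FC m → AlphaFilteredSink α m → ETightSink FC m →
      ETightSink FD (fun i => F.map (m i))

/-- A category `K` is α-filtered: every diagram in `K` with fewer than `α`
arrows admits a cocone. -/
def IsAlphaFiltered (α : Cardinal.{v}) (K : Type v) [SmallCategory K] : Prop :=
  ∀ (J : Type v) (_ : SmallCategory J), Cardinal.mk (Arrow J) < α →
    ∀ G : J ⥤ K, Nonempty (Cocone G)

/-- A cocone is an `M`-cocone if all of its components lie in `M`. -/
def MCocone (F : ProperFS C) {K : Type v} [SmallCategory K] {G : K ⥤ C}
    (c : Cocone G) : Prop :=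
  ∀ k, F.M (c.ι.app k)

/-- `F` is α-bounded: it preserves the `E`-tightness of small α-filtered
`M`-cocones, i.e. for every small α-filtered diagram `G` and `M`-cocone `c` on
`G` whose induced morphism `colim G ⟶ c.pt` lies in `E`, the induced morphism
`colim (G ⋙ F) ⟶ F c.pt` lies in `E`. -/
def AlphaBounded (FC : ProperFS C) (FD : ProperFS D) (α : Cardinal.{v})
    (F : C ⥤ D) : Prop :=
  ∀ (K : Type v) (_ : SmallCategory K), IsAlphaFiltered α K →
    ∀ (G : K ⥤ C) (c : Cocone G), MCocone FC c →
      FC.E (colimit.desc G c) →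
        FD.E (colimit.desc (G ⋙ F) (F.mapCocone c))

/-- In a proper factorization system, `E` is closed under right cancellation. -/
lemma cancel_E (P : ProperFS C) {X Y Z : C} (f : X ⟶ Y) (g : Y ⟶ Z)
    (h : P.E (f ≫ g)) : P.E g := by
  obtain ⟨W, e, n, he, hn, hfac⟩ := P.fac g
  haveI : Mono n := P.mono_of_M n hn
  obtain ⟨t, ⟨ht1, ht2⟩, -⟩ := P.lift (f ≫ g) n h hn (f ≫ e) (𝟙 Z)
    (by rw [Category.comp_id, Category.assoc, hfac])
  haveI : IsIso n := by
    refine ⟨t, ?_, ht2⟩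
    rw [← cancel_mono n, Category.assoc, ht2, Category.comp_id, Category.id_comp]
  rw [← hfac]
  exact P.E_comp e n he (P.E_of_iso n inferInstance)

/-- Key fact: for a cocone `c` with components in `M`, the induced morphism out
of the colimit lies in `E` iff the cocone is an `E`-tight sink. -/
lemma tight_iff_desc (P : ProperFS C) {K : Type v} [SmallCategory K]
    {G : K ⥤ C} (c : Cocone G) (hMc : MCocone P c) :
    P.E (Sigma.desc (fun k => c.ι.app k)) ↔ P.E (colimit.desc G c) := by
  have hq : Sigma.desc (fun k => c.ι.app k)
      = Sigma.desc (fun k => colimit.ι G k) ≫ colimit.desc G c := by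
    apply Sigma.hom_ext
    intro k
    simp
  constructor
  · intro h
    rw [hq] at h
    exact cancel_E P _ _ h
  · intro hd
    obtain ⟨Z, e, n, he, hn, hfac⟩ := P.fac (Sigma.desc (fun k => c.ι.app k))
    haveI : Mono n := P.mono_of_M n hn
    set u : ∀ k, G.obj k ⟶ Z := fun k => Sigma.ι (fun k => G.obj k) k ≫ e with hu_def
    have hu : ∀ k, u k ≫ n = c.ι.app k := by
      intro k
      rw [hu_def]
      simp only [Category.assoc, hfac]
      simp
    let cu : Cocone G :=
      { pt := Z
        ι :=
          { app := u
            naturality := by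
              intro j k f
              have key : (G.map f ≫ u k) ≫ n = u j ≫ n := by
                rw [Category.assoc, hu, hu]
                exact c.w f
              exact ((cancel_mono n).1 key).trans (Category.comp_id _).symm } }
    have hw : colimit.desc G cu ≫ n = colimit.desc G c := by
      apply colimit.hom_ext
      intro k
      simp [cu, hu]
    obtain ⟨t, ⟨ht1, ht2⟩, -⟩ := P.lift (colimit.desc G c) n hd hn
      (colimit.desc G cu) (𝟙 c.pt) (by rw [Category.comp_id, hw])
    haveI : IsIso n := by
      refine ⟨t, ?_, ht2⟩
      rw [← cancel_mono n, Category.assoc, ht2, Category.comp_id, Category.id_comp]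
    rw [← hfac]
    exact P.E_comp e n he (P.E_of_iso n inferInstance)

/-- The thin category associated to a sink `m`: morphisms `j ⟶ i` are
factorizations of `m j` through `m i`. -/
def sinkCat {I : Type v} {X : C} {Y : I → C} (m : ∀ i, Y i ⟶ X) :
    SmallCategory I where
  Hom j i := {t : Y j ⟶ Y i // t ≫ m i = m j}
  id i := ⟨𝟙 (Y i), Category.id_comp _⟩
  comp f g := ⟨f.1 ≫ g.1, by rw [Category.assoc, g.2, f.2]⟩
  id_comp f := Subtype.ext (Category.id_comp f.1)
  comp_id f := Subtype.ext (Category.comp_id f.1)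
  assoc f g h := Subtype.ext (Category.assoc f.1 g.1 h.1)

theorem stmt15 (FC : ProperFS C) (FD : ProperFS D) (α : Cardinal.{v})
    (hα : α.IsRegular)
    (hcoint : ∀ (I : Type v) (X : C) (Y : I → C) (e : ∀ i, X ⟶ Y i),
      (∀ i, FC.E (e i)) → HasWidePushout X Y e)
    (hcointD : ∀ (I : Type v) (X : D) (Y : I → D) (e : ∀ i, X ⟶ Y i),
      (∀ i, FD.E (e i)) → HasWidePushout X Y e)
    (F : C ⥤ D) (hM : ∀ {X Y : C} (m : X ⟶ Y), FC.M m → FD.M (F.map m)) :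
    PreservesTightSinks FC FD α F ↔ AlphaBounded FC FD α F := by
  constructor
  · -- preserving tight sinks implies α-bounded
    intro hp K instK hK G c hMc hE
    -- view the cocone as a sink indexed by the objects of `K`
    have hMs : MSink FC (fun k => c.ι.app k) := hMc
    have hfs : AlphaFilteredSink α (fun k => c.ι.app k) := by
      intro s hs
      -- restrict along the discrete category on `s`
      have hcard : Cardinal.mk (Arrow (Discrete s)) < α := by
        refine lt_of_le_of_lt (Cardinal.mk_le_of_surjective
          (f := fun j : s => Arrow.mk (𝟙 (Discrete.mk j))) ?_) hs
        rintro ⟨⟨l⟩, ⟨r⟩, h⟩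
        obtain rfl : l = r := Discrete.eq_of_hom h
        exact ⟨l, by congr 1⟩
      obtain ⟨cc⟩ := hK (Discrete s) inferInstance hcard
        (Discrete.functor (fun j : s => (j : K)))
      refine ⟨cc.pt, fun j hj => ⟨G.map (cc.ι.app ⟨⟨j, hj⟩⟩), c.w _⟩⟩
    have ht : ETightSink FC (fun k => c.ι.app k) :=
      (tight_iff_desc FC c hMc).2 hE
    have := hp K c.pt G.obj (fun k => c.ι.app k) hMs hfs ht
    exact (tight_iff_desc FD (F.mapCocone c) (fun k => hM _ (hMc k))).1 this
  · -- α-bounded implies preserving tight sinks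
    intro hb I X Y m hMs hfs ht
    letI : SmallCategory I := sinkCat m
    have hsub : ∀ (a b : I) (f g : a ⟶ b), f = g := by
      intro a b f g
      haveI : Mono (m b) := FC.mono_of_M (m b) (hMs b)
      exact Subtype.ext (by rw [← cancel_mono (m b), f.2, g.2])
    set G : I ⥤ C :=
      { obj := Y
        map := fun f => f.1
        map_id := fun a => rfl
        map_comp := fun f g => rfl } with hG
    set c : Cocone G :=
      { pt := X
        ι :=
          { app := m
            naturality := by
              intro a b f
              exact f.2.trans (Category.comp_id (m a)).symm } } with hc
    have hMc : MCocone FC c := hMs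
    have hfilK : IsAlphaFiltered α I := by
      intro J instJ hJ G'
      have hcard : Cardinal.mk (Set.range (fun j : J => G'.obj j)) < α := by
        refine lt_of_le_of_lt (le_trans Cardinal.mk_range_le
          (Cardinal.mk_le_of_injective
            (f := fun j : J => Arrow.mk (𝟙 j)) ?_)) hJ
        intro a b h
        exact congrArg Comma.left h
      obtain ⟨i, hi⟩ := hfs _ hcard
      refine ⟨⟨i, { app := fun j => ?_, naturality := fun a b f => hsub _ _ _ _ }⟩⟩
      exact ⟨(hi (G'.obj j) ⟨j, rfl⟩).choose, (hi (G'.obj j) ⟨j, rfl⟩).choose_spec⟩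
    have hE : FC.E (colimit.desc G c) :=
      (tight_iff_desc FC c hMc).1 ht
    have := hb I _ hfilK G c hMc hE
    exact (tight_iff_desc FD (F.mapCocone c) (fun k => hM _ (hMc k))).2 this

end

end Stmt15
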